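/- arXiv:2411.13003 — 2 statements merged into one kernel-verified Lean document; each statement's English description precedes it below -/
import Mathlib

section
/- m₁ = (t^(q+rs) / ((1−t^q)(1−t^r))) · (Ỹ(t)X(t) − X̃(t)Y(t)) in ℚ(t). -/
open Finset

noncomputable section

namespace TTK

/-- `res p x` is the residue `[x]` of `x` modulo `p`. -/
def res (p : ℕ) (x : ℤ) : ℤ := x % (p : ℤ)

/-- The set `Q = {[n·q⁻¹] : n = 0, …, r−1}`. -/
def Qset (p r : ℕ) (qinv : ℤ) : Finset ℤ :=
  (Finset.range r).image fun n : ℕ => res p ((n : ℤ) * qinv)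

/-- The set `R = {[−n·q⁻¹] : n = 1, …, q}`. -/
def Rset (p q : ℕ) (qinv : ℤ) : Finset ℤ :=
  (Finset.Icc 1 q).image fun n : ℕ => res p (-(n : ℤ) * qinv)

/-- `Qi i` is `Q_i`, the `i`-th smallest element of `Q`. -/
def Qi (p r : ℕ) (qinv : ℤ) (i : ℕ) : ℤ :=
  ((Qset p r qinv).sort (· ≤ ·)).getD i 0

/-- `Q' = [r·q⁻¹]`. -/
def Qp' (p r : ℕ) (qinv : ℤ) : ℤ := res p ((r : ℤ) * qinv)

/-- `m` is the unique index with `Q_m < Q'` and (`m = r−1` or `Q' < Q_{m+1}`),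
i.e. the number of elements of `Q` below `Q'`, minus one. -/
def mIdx (p r : ℕ) (qinv : ℤ) : ℕ :=
  ((Qset p r qinv).filter fun x => x < Qp' p r qinv).card - 1

/-- `k_i = #{l ∈ R : Q_{i−1} ≤ l < Q_i}` for `1 ≤ i ≤ r−1`, and
`k_r = #{l ∈ R : Q_{r−1} ≤ l}`. -/
def ki (p q r : ℕ) (qinv : ℤ) (i : ℕ) : ℕ :=
  if i = r then ((Rset p q qinv).filter fun l => Qi p r qinv (r - 1) ≤ l).card
  else ((Rset p q qinv).filter fun l => Qi p r qinv (i - 1) ≤ l ∧ l < Qi p r qinv i).card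

/-- `k̄_i = k_1 + ⋯ + k_i` (with `k̄_0 = 0`). -/
def kbar (p q r : ℕ) (qinv : ℤ) (i : ℕ) : ℕ := ∑ j ∈ Finset.Icc 1 i, ki p q r qinv j

/-- `k' = #{l ∈ R : Q_m ≤ l < Q'}`. -/
def k' (p q r : ℕ) (qinv : ℤ) : ℕ :=
  ((Rset p q qinv).filter fun l =>
      Qi p r qinv (mIdx p r qinv) ≤ l ∧ l < Qp' p r qinv).card

/-- `k̄' = k̄_m + k'`. -/
def kbar' (p q r : ℕ) (qinv : ℤ) : ℕ :=
  kbar p q r qinv (mIdx p r qinv) + k' p q r qinv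

/-- `d_i = Q_i − Q_{i−1}` for `1 ≤ i ≤ r−1`, and `d_r = p − Q_{r−1}`. -/
def di (p r : ℕ) (qinv : ℤ) (i : ℕ) : ℤ :=
  if i = r then (p : ℤ) - Qi p r qinv (r - 1)
  else Qi p r qinv i - Qi p r qinv (i - 1)

/-- `Q_i` extended by the convention `Q_r = p`. -/
def QiE (p r : ℕ) (qinv : ℤ) (i : ℕ) : ℤ := if i = r then (p : ℤ) else Qi p r qinv i

/-- `X(t)`. -/
def XX (p q r : ℕ) (qinv s : ℤ) : RatFunc ℚ :=
  1 - (1 - RatFunc.X ^ ((r : ℤ) * s)) *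
        ∑ i ∈ Finset.Icc 1 (r - 1),
          RatFunc.X ^ ((kbar p q r qinv i : ℤ) * (p : ℤ) + ((i : ℤ) - 1) * ((r : ℤ) * s))
    - RatFunc.X ^ ((p : ℤ) * (q : ℤ) + ((r : ℤ) - 1) * ((r : ℤ) * s))

/-- `X̃(t)`. -/
def XXt (p q r : ℕ) (qinv s : ℤ) : RatFunc ℚ :=
  1 - (1 - RatFunc.X ^ ((r : ℤ) * s)) *
        ∑ i ∈ Finset.Icc 1 (mIdx p r qinv),
          RatFunc.X ^ ((kbar p q r qinv i : ℤ) * (p : ℤ) + ((i : ℤ) - 1) * ((r : ℤ) * s))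
    - RatFunc.X ^ ((kbar' p q r qinv : ℤ) * (p : ℤ) + (mIdx p r qinv : ℤ) * ((r : ℤ) * s))

/-- `Y(t)`. -/
def YY (p q r : ℕ) (qinv s : ℤ) : RatFunc ℚ :=
  1 - (1 - RatFunc.X ^ ((r : ℤ) * s)) *
        ∑ i ∈ Finset.Icc 1 (r - 1),
          RatFunc.X ^ (Qi p r qinv i * (q : ℤ) + ((i : ℤ) - 1) * ((r : ℤ) * s))
    - RatFunc.X ^ ((p : ℤ) * (q : ℤ) + ((r : ℤ) - 1) * ((r : ℤ) * s))

/-- `Ỹ(t)`. -/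
def YYt (p q r : ℕ) (qinv s : ℤ) : RatFunc ℚ :=
  1 - (1 - RatFunc.X ^ ((r : ℤ) * s)) *
        ∑ i ∈ Finset.Icc 1 (mIdx p r qinv),
          RatFunc.X ^ (Qi p r qinv i * (q : ℤ) + ((i : ℤ) - 1) * ((r : ℤ) * s))
    - RatFunc.X ^ (Qp' p r qinv * (q : ℤ) + (mIdx p r qinv : ℤ) * ((r : ℤ) * s))

def a11 (p q r : ℕ) (qinv s : ℤ) : RatFunc ℚ :=
  XXt p q r qinv s / (1 - RatFunc.X ^ (p : ℤ))

def a12 (p q r : ℕ) (qinv s : ℤ) : RatFunc ℚ :=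
  ((1 - RatFunc.X ^ ((r : ℤ) * s)) / (1 - RatFunc.X ^ (r : ℤ))) *
      ∑ i ∈ Finset.Icc 1 (mIdx p r qinv),
        RatFunc.X ^ ((kbar p q r qinv i : ℤ) * (p : ℤ) + ((i : ℤ) - 1) * ((r : ℤ) * s))
    + RatFunc.X ^ ((kbar' p q r qinv : ℤ) * (p : ℤ) + (mIdx p r qinv : ℤ) * ((r : ℤ) * s))

def a13 (p q r : ℕ) (qinv s : ℤ) : RatFunc ℚ :=
  RatFunc.X ^ (q : ℤ) * YYt p q r qinv s / (1 - RatFunc.X ^ (q : ℤ))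

def a14 (p q r : ℕ) (qinv s : ℤ) : RatFunc ℚ :=
  RatFunc.X ^ ((r : ℤ) * s) *
    ∑ i ∈ Finset.Icc 1 (mIdx p r qinv),
      RatFunc.X ^ (Qi p r qinv i * (q : ℤ) + ((i : ℤ) - 1) * ((r : ℤ) * s))

def a22 (r : ℕ) (s : ℤ) : RatFunc ℚ :=
  (1 - RatFunc.X ^ ((r : ℤ) * s)) / (1 - RatFunc.X ^ (r : ℤ))

def a24 (r : ℕ) (s : ℤ) : RatFunc ℚ := RatFunc.X ^ ((r : ℤ) * s)

def a31 (p q r : ℕ) (qinv s : ℤ) : RatFunc ℚ :=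
  XX p q r qinv s / (1 - RatFunc.X ^ (p : ℤ))

def a32 (p q r : ℕ) (qinv s : ℤ) : RatFunc ℚ :=
  ((1 - RatFunc.X ^ ((r : ℤ) * s)) / (1 - RatFunc.X ^ (r : ℤ))) *
    ∑ i ∈ Finset.Icc 1 r,
      RatFunc.X ^ ((kbar p q r qinv i : ℤ) * (p : ℤ) + ((i : ℤ) - 1) * ((r : ℤ) * s))

def a33 (p q r : ℕ) (qinv s : ℤ) : RatFunc ℚ :=
  RatFunc.X ^ (q : ℤ) * YY p q r qinv s / (1 - RatFunc.X ^ (q : ℤ))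

def a34 (p q r : ℕ) (qinv s : ℤ) : RatFunc ℚ :=
  ∑ i ∈ Finset.Icc 1 r,
    RatFunc.X ^ (QiE p r qinv i * (q : ℤ) + (i : ℤ) * ((r : ℤ) * s))

/-- The minor `m₁`. -/
def minor1 (p q r : ℕ) (qinv s : ℤ) : RatFunc ℚ :=
  a13 p q r qinv s * (a22 r s * a34 p q r qinv s - a24 r s * a32 p q r qinv s) +
    a33 p q r qinv s * (a12 p q r qinv s * a24 r s - a14 p q r qinv s * a22 r s)

/-- The minor `m₂`. -/
def minor2 (p q r : ℕ) (qinv s : ℤ) : RatFunc ℚ :=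
  a24 r s * (a11 p q r qinv s * a33 p q r qinv s - a13 p q r qinv s * a31 p q r qinv s)

/-- The minor `m₃`. -/
def minor3 (p q r : ℕ) (qinv s : ℤ) : RatFunc ℚ :=
  a22 r s * (a11 p q r qinv s * a34 p q r qinv s - a14 p q r qinv s * a31 p q r qinv s) -
    a24 r s * (a11 p q r qinv s * a32 p q r qinv s - a12 p q r qinv s * a31 p q r qinv s)

/-- `ord₀ f`, the order of vanishing of `f` at `t = 0`. -/
def ord0 (f : RatFunc ℚ) : ℤ :=
  (f.num.rootMultiplicity 0 : ℤ) - (f.denom.rootMultiplicity 0 : ℤ)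

/-- `span f = deg f − ord₀ f`. -/
def spanDeg (f : RatFunc ℚ) : ℤ := f.intDegree - ord0 f

/-- `D(t)`, the paper's formula for the Alexander polynomial of `T(p,q;r,s)`. -/
def DD (p q r : ℕ) (qinv s : ℤ) : RatFunc ℚ :=
  (1 - RatFunc.X) *
      (XXt p q r qinv s * YY p q r qinv s - XX p q r qinv s * YYt p q r qinv s) /
    ((1 - RatFunc.X ^ (p : ℤ)) * (1 - RatFunc.X ^ (q : ℤ)) * (1 - RatFunc.X ^ (r : ℤ)))

end TTK

open TTK

namespace TTKaux
open TTK Finset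

lemma emod_mul_cancel (p a b : ℤ) : (a % p * b) % p = (a * b) % p := by
  rw [Int.mul_emod, Int.emod_emod_of_dvd _ dvd_rfl, ← Int.mul_emod]

lemma emod_neg_cancel (p a : ℤ) : (-(a % p)) % p = (-a) % p := by
  have := emod_mul_cancel p a (-1)
  simpa [mul_comm] using this

section main
variable {p q r : ℕ} {qinv : ℤ}

lemma hA (hqinv : ((q:ℤ) * qinv) % (p:ℤ) = 1) (a : ℤ) :
    (a * qinv * (q:ℤ)) % (p:ℤ) = a % p := by
  rw [mul_assoc, Int.mul_emod a, mul_comm qinv, hqinv, mul_one, Int.emod_emod_of_dvd _ dvd_rfl]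

lemma hB (hqinv : ((q:ℤ) * qinv) % (p:ℤ) = 1) (a : ℤ) :
    (a * (q:ℤ) * qinv) % (p:ℤ) = a % p := by
  rw [mul_assoc, Int.mul_emod a, hqinv, mul_one, Int.emod_emod_of_dvd _ dvd_rfl]

lemma res_nonneg (hp : 0 < p) (x : ℤ) : 0 ≤ res p x :=
  Int.emod_nonneg x (by exact_mod_cast hp.ne')

lemma res_lt (hp : 0 < p) (x : ℤ) : res p x < p :=
  Int.emod_lt_of_pos x (by exact_mod_cast hp)

lemma card_Qset (hqinv : ((q:ℤ) * qinv) % (p:ℤ) = 1) (hrp : r < p) :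
    (Qset p r qinv).card = r := by
  rw [Qset, Finset.card_image_of_injOn, Finset.card_range]
  intro a ha b hb hab
  simp only [Finset.coe_range, Set.mem_Iio] at ha hb
  have h1 : ((a:ℤ) * qinv * q) % p = ((b:ℤ) * qinv * q) % p := by
    rw [← emod_mul_cancel (p:ℤ) ((a:ℤ)*qinv) q, ← emod_mul_cancel (p:ℤ) ((b:ℤ)*qinv) q]
    simpa [res] using congrArg (fun x : ℤ => (x * q) % p) hab
  rw [hA hqinv, hA hqinv] at h1
  have ha' : ((a:ℤ)) % p = a := Int.emod_eq_of_lt (by positivity) (by exact_mod_cast ha.trans hrp)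
  have hb' : ((b:ℤ)) % p = b := Int.emod_eq_of_lt (by positivity) (by exact_mod_cast hb.trans hrp)
  rw [ha', hb'] at h1
  exact_mod_cast h1

lemma card_Rset (hqinv : ((q:ℤ) * qinv) % (p:ℤ) = 1) (hqp : q < p) :
    (Rset p q qinv).card = q := by
  rw [Rset, Finset.card_image_of_injOn, Nat.card_Icc]
  · omega
  intro a ha b hb hab
  simp only [Finset.coe_Icc, Set.mem_Icc] at ha hb
  have h1 : (-(a:ℤ) * qinv * q) % p = (-(b:ℤ) * qinv * q) % p := by
    rw [← emod_mul_cancel (p:ℤ) (-(a:ℤ)*qinv) q, ← emod_mul_cancel (p:ℤ) (-(b:ℤ)*qinv) q]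
    simpa [res] using congrArg (fun x : ℤ => (x * q) % p) hab
  rw [hA hqinv, hA hqinv] at h1
  rw [Int.emod_eq_emod_iff_emod_sub_eq_zero] at h1
  have h2 : (p:ℤ) ∣ ((b:ℤ) - a) := by
    have := Int.dvd_of_emod_eq_zero h1
    have heq : -(a:ℤ) - -(b:ℤ) = (b:ℤ) - a := by ring
    rwa [heq] at this
  have h3 : ((b:ℤ) - a) = 0 := by
    apply Int.eq_zero_of_abs_lt_dvd h2
    have h4 : (q:ℤ) < p := by exact_mod_cast hqp
    have ha1 : (1:ℤ) ≤ a := by exact_mod_cast ha.1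
    have ha2 : (a:ℤ) ≤ q := by exact_mod_cast ha.2
    have hb1 : (1:ℤ) ≤ b := by exact_mod_cast hb.1
    have hb2 : (b:ℤ) ≤ q := by exact_mod_cast hb.2
    rw [abs_lt]; constructor <;> linarith
  omega

lemma sortQ_length (hqinv : ((q:ℤ) * qinv) % (p:ℤ) = 1) (hrp : r < p) :
    ((Qset p r qinv).sort (· ≤ ·)).length = r := by
  rw [Finset.length_sort, card_Qset hqinv hrp]

lemma Qi_eq_get (hqinv : ((q:ℤ) * qinv) % (p:ℤ) = 1) (hrp : r < p) {i : ℕ} (hi : i < r) :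
    Qi p r qinv i = ((Qset p r qinv).sort (· ≤ ·))[i]'(by rwa [sortQ_length hqinv hrp]) := by
  rw [Qi, List.getD_eq_getElem _ 0 (by rwa [sortQ_length hqinv hrp])]

lemma Qi_mem (hqinv : ((q:ℤ) * qinv) % (p:ℤ) = 1) (hrp : r < p) {i : ℕ} (hi : i < r) :
    Qi p r qinv i ∈ Qset p r qinv := by
  rw [Qi_eq_get hqinv hrp hi, ← Finset.mem_sort (· ≤ ·)]
  exact List.getElem_mem _

lemma Qi_strictMono (hqinv : ((q:ℤ) * qinv) % (p:ℤ) = 1) (hrp : r < p)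
    {i j : ℕ} (hij : i < j) (hj : j < r) : Qi p r qinv i < Qi p r qinv j := by
  rw [Qi_eq_get hqinv hrp (hij.trans hj), Qi_eq_get hqinv hrp hj]
  have hs := (Finset.sortedLT_sort (Qset p r qinv)).pairwise
  exact List.Pairwise.rel_get_of_lt hs (by simpa using hij)

lemma Qi_mono (hqinv : ((q:ℤ) * qinv) % (p:ℤ) = 1) (hrp : r < p)
    {i j : ℕ} (hij : i ≤ j) (hj : j < r) : Qi p r qinv i ≤ Qi p r qinv j := by
  rcases eq_or_lt_of_le hij with h | h
  · rw [h]
  · exact (Qi_strictMono hqinv hrp h hj).le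

lemma Qset_exists (hqinv : ((q:ℤ) * qinv) % (p:ℤ) = 1) (hrp : r < p) {x : ℤ}
    (hx : x ∈ Qset p r qinv) : ∃ i, i < r ∧ Qi p r qinv i = x := by
  rw [← Finset.mem_sort (· ≤ ·), List.mem_iff_getElem] at hx
  obtain ⟨i, hi, hix⟩ := hx
  have hi' : i < r := by rwa [sortQ_length hqinv hrp] at hi
  exact ⟨i, hi', by rw [Qi_eq_get hqinv hrp hi']; exact hix⟩

lemma Qset_nonneg (hp : 0 < p) {x : ℤ} (hx : x ∈ Qset p r qinv) : 0 ≤ x := by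
  rw [Qset, Finset.mem_image] at hx
  obtain ⟨n, _, rfl⟩ := hx
  exact res_nonneg hp _

lemma Qset_lt (hp : 0 < p) {x : ℤ} (hx : x ∈ Qset p r qinv) : x < p := by
  rw [Qset, Finset.mem_image] at hx
  obtain ⟨n, _, rfl⟩ := hx
  exact res_lt hp _

lemma zero_mem_Qset (h0r : 0 < r) : (0:ℤ) ∈ Qset p r qinv := by
  rw [Qset, Finset.mem_image]
  exact ⟨0, by simpa using h0r, by simp [res]⟩

lemma Qi_zero (hp : 0 < p) (hqinv : ((q:ℤ) * qinv) % (p:ℤ) = 1) (hrp : r < p) (h0r : 0 < r) :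
    Qi p r qinv 0 = 0 := by
  obtain ⟨i, hi, hix⟩ := Qset_exists hqinv hrp (zero_mem_Qset (p := p) (qinv := qinv) h0r)
  have h1 : Qi p r qinv 0 ≤ Qi p r qinv i := Qi_mono hqinv hrp (Nat.zero_le i) hi
  have h2 : 0 ≤ Qi p r qinv 0 := Qset_nonneg hp (Qi_mem hqinv hrp h0r)
  omega

lemma count_iff (hqinv : ((q:ℤ) * qinv) % (p:ℤ) = 1) (hrp : r < p)
    (P : ℤ → Prop) [DecidablePred P] (hP : ∀ a b : ℤ, a ≤ b → P b → P a)
    {i : ℕ} (hi : i < r) :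
    i < ((Qset p r qinv).filter P).card ↔ P (Qi p r qinv i) := by
  constructor
  · intro h
    by_contra hnP
    have hsub : (Qset p r qinv).filter P ⊆ (Finset.range i).image (Qi p r qinv) := by
      intro x hx
      rw [Finset.mem_filter] at hx
      obtain ⟨j, hj, rfl⟩ := Qset_exists hqinv hrp hx.1
      rw [Finset.mem_image]
      refine ⟨j, ?_, rfl⟩
      rw [Finset.mem_range]
      by_contra hji
      exact hnP (hP _ _ (Qi_mono hqinv hrp (by omega) hj) hx.2)
    have h2 := (Finset.card_le_card hsub).trans Finset.card_image_le
    rw [Finset.card_range] at h2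
    omega
  · intro h
    have hsub : (Finset.range (i+1)).image (Qi p r qinv) ⊆ (Qset p r qinv).filter P := by
      intro x hx
      rw [Finset.mem_image] at hx
      obtain ⟨j, hj, rfl⟩ := hx
      rw [Finset.mem_range] at hj
      rw [Finset.mem_filter]
      exact ⟨Qi_mem hqinv hrp (by omega), hP _ _ (Qi_mono hqinv hrp (by omega) hi) h⟩
    have hcard : ((Finset.range (i+1)).image (Qi p r qinv)).card = i + 1 := by
      rw [Finset.card_image_of_injOn, Finset.card_range]
      intro a ha b hb hab
      simp only [Finset.coe_range, Set.mem_Iio] at ha hb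
      by_contra hne
      rcases Nat.lt_or_ge a b with h' | h'
      · exact absurd hab (Qi_strictMono hqinv hrp h' (by omega)).ne
      · have : b < a := by omega
        exact absurd hab.symm (Qi_strictMono hqinv hrp this (by omega)).ne
    have := Finset.card_le_card hsub
    omega

lemma Rset_nonneg (hp : 0 < p) {x : ℤ} (hx : x ∈ Rset p q qinv) : 0 ≤ x := by
  rw [Rset, Finset.mem_image] at hx
  obtain ⟨n, _, rfl⟩ := hx
  exact res_nonneg hp _

lemma Rset_lt (hp : 0 < p) {x : ℤ} (hx : x ∈ Rset p q qinv) : x < p := by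
  rw [Rset, Finset.mem_image] at hx
  obtain ⟨n, _, rfl⟩ := hx
  exact res_lt hp _

lemma mem_Rset_iff (hqinv : ((q:ℤ) * qinv) % (p:ℤ) = 1) (hqp : q < p)
    {l : ℤ} (hl0 : 0 ≤ l) (hlp : l < p) :
    l ∈ Rset p q qinv ↔ 1 ≤ (-(l*q)) % (p:ℤ) ∧ (-(l*q)) % (p:ℤ) ≤ q := by
  constructor
  · intro hx
    rw [Rset, Finset.mem_image] at hx
    obtain ⟨n, hn, rfl⟩ := hx
    rw [Finset.mem_Icc] at hn
    have key : (-(res p (-(n:ℤ) * qinv) * q)) % (p:ℤ) = n := by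
      have e1 : (-(res p (-(n:ℤ) * qinv) * q)) = (-(res p (-(n:ℤ) * qinv))) * q := by ring
      rw [e1, ← emod_mul_cancel (p:ℤ) (-(res p (-(n:ℤ) * qinv))) q]
      rw [res, emod_neg_cancel]
      have e2 : (-(-(n:ℤ) * qinv)) = (n:ℤ) * qinv := by ring
      rw [e2, emod_mul_cancel, hA hqinv]
      exact Int.emod_eq_of_lt (by positivity) (by exact_mod_cast hn.2.trans_lt hqp)
    rw [key]
    exact ⟨by exact_mod_cast hn.1, by exact_mod_cast hn.2⟩
  · rintro ⟨h1, h2⟩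
    set c := (-(l*q)) % (p:ℤ) with hc
    rw [Rset, Finset.mem_image]
    refine ⟨c.toNat, ?_, ?_⟩
    · rw [Finset.mem_Icc]
      constructor
      · omega
      · have : (c.toNat : ℤ) ≤ q := by omega
        exact_mod_cast this
    · have hcn : ((c.toNat : ℤ)) = c := by omega
      rw [res, hcn, hc]
      have e1 : -((-(l*q)) % (p:ℤ)) * qinv = (-((-(l*q)) % (p:ℤ))) * qinv := rfl
      rw [← emod_mul_cancel (p:ℤ) (-((-(l*q)) % (p:ℤ))) qinv, emod_neg_cancel]
      have e2 : (-(-(l*q))) = l * q := by ring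
      rw [e2, emod_mul_cancel, hB hqinv]
      exact Int.emod_eq_of_lt hl0 hlp

def fQ (p r : ℕ) (qinv : ℤ) (l : ℤ) : ℕ := ((Qset p r qinv).filter (fun x => x ≤ l)).card

lemma fQ_pos (hp : 0 < p) (hqinv : ((q:ℤ) * qinv) % (p:ℤ) = 1) (hrp : r < p) (h0r : 0 < r)
    {l : ℤ} (hl : 0 ≤ l) : 0 < fQ p r qinv l := by
  rw [fQ, ← Nat.succ_le_iff]
  have := (count_iff hqinv hrp (fun x => x ≤ l) (fun a b hab hb => hab.trans hb) (i := 0) h0r).mpr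
    (by rw [Qi_zero hp hqinv hrp h0r]; exact hl)
  omega

lemma fQ_le (hqinv : ((q:ℤ) * qinv) % (p:ℤ) = 1) (hrp : r < p) (l : ℤ) :
    fQ p r qinv l ≤ r := by
  have h := Finset.card_filter_le (Qset p r qinv) (fun x => x ≤ l)
  rwa [card_Qset hqinv hrp] at h

lemma fQ_eq_iff_lt (hqinv : ((q:ℤ) * qinv) % (p:ℤ) = 1) (hrp : r < p)
    {j : ℕ} (h1 : 1 ≤ j) (hjr : j < r) (l : ℤ) :
    fQ p r qinv l = j ↔ Qi p r qinv (j-1) ≤ l ∧ l < Qi p r qinv j := by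
  have c1 := count_iff (p := p) hqinv hrp (fun x => x ≤ l) (fun a b hab hb => hab.trans hb)
    (i := j - 1) (by omega)
  have c2 := count_iff (p := p) hqinv hrp (fun x => x ≤ l) (fun a b hab hb => hab.trans hb)
    (i := j) hjr
  rw [fQ]
  constructor
  · intro h
    refine ⟨c1.mp (by omega), ?_⟩
    have := c2.not.mp (by omega)
    simp only [not_le] at this
    exact this
  · rintro ⟨ha, hb⟩
    have d1 := c1.mpr ha
    have d2 := c2.not.mpr (by simpa using not_le.mpr hb)
    omega

lemma fQ_eq_r_iff (hqinv : ((q:ℤ) * qinv) % (p:ℤ) = 1) (hrp : r < p) (h0r : 0 < r) (l : ℤ) :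
    fQ p r qinv l = r ↔ Qi p r qinv (r-1) ≤ l := by
  have c1 := count_iff (p := p) hqinv hrp (fun x => x ≤ l) (fun a b hab hb => hab.trans hb)
    (i := r - 1) (by omega)
  have c3 := fQ_le (p := p) hqinv hrp l
  rw [fQ] at *
  constructor
  · intro h
    exact c1.mp (by omega)
  · intro h
    have := c1.mpr h
    omega

lemma kbar_r_eq (hp : 0 < p) (hqinv : ((q:ℤ) * qinv) % (p:ℤ) = 1) (hqp : q < p)
    (hrp : r < p) (h0r : 0 < r) : kbar p q r qinv r = q := by
  have htot : (Rset p q qinv).card = ∑ j ∈ Finset.Icc 1 r, ki p q r qinv j := by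
    rw [Finset.card_eq_sum_card_fiberwise (f := fQ p r qinv) (t := Finset.Icc 1 r)
      (fun l hl => by
        rw [Finset.mem_coe, Finset.mem_Icc]
        exact ⟨fQ_pos hp hqinv hrp h0r (Rset_nonneg hp hl), fQ_le hqinv hrp l⟩)]
    refine Finset.sum_congr rfl fun j hj => ?_
    rw [Finset.mem_Icc] at hj
    rcases eq_or_lt_of_le hj.2 with hjr | hjr
    · rw [ki, if_pos hjr]
      congr 1
      ext l
      simp only [Finset.mem_filter, and_congr_right_iff]
      intro hl
      rw [hjr, fQ_eq_r_iff hqinv hrp h0r]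
    · rw [ki, if_neg (by omega)]
      congr 1
      ext l
      simp only [Finset.mem_filter, and_congr_right_iff]
      intro hl
      rw [fQ_eq_iff_lt hqinv hrp hj.1 hjr]
  rw [kbar, ← htot, card_Rset (p := p) hqinv hqp]

lemma Qp'_mul_q_mod (hqinv : ((q:ℤ) * qinv) % (p:ℤ) = 1) (hrp : r < p) :
    (Qp' p r qinv * q) % (p:ℤ) = r := by
  rw [Qp', res, emod_mul_cancel, hA hqinv]
  exact Int.emod_eq_of_lt (by positivity) (by exact_mod_cast hrp)

lemma Qp'_pos (hp : 0 < p) (hqinv : ((q:ℤ) * qinv) % (p:ℤ) = 1) (h0r : 0 < r) (hrp : r < p) :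
    0 < Qp' p r qinv := by
  have h1 : 0 ≤ Qp' p r qinv := res_nonneg hp _
  rcases eq_or_lt_of_le h1 with h | h
  · exfalso
    have h2 := Qp'_mul_q_mod (p := p) hqinv hrp
    rw [← h] at h2
    simp at h2
    omega
  · exact h

lemma Qp'_lt (hp : 0 < p) : Qp' p r qinv < p := res_lt hp _

-- `mIdx + 1` equals the number of elements of `Qset` below `Q'`.
lemma mIdx_succ (hp : 0 < p) (hqinv : ((q:ℤ) * qinv) % (p:ℤ) = 1) (h0r : 0 < r) (hrp : r < p) :
    mIdx p r qinv + 1 = ((Qset p r qinv).filter fun x => x < Qp' p r qinv).card := by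
  rw [mIdx]
  have h1 : 0 < ((Qset p r qinv).filter fun x => x < Qp' p r qinv).card := by
    have := (count_iff (p := p) hqinv hrp (fun x => x < Qp' p r qinv)
      (fun a b hab hb => lt_of_le_of_lt hab hb) (i := 0) h0r).mpr
      (by rw [Qi_zero hp hqinv hrp h0r]; exact Qp'_pos hp hqinv h0r hrp)
    omega
  omega

lemma mIdx_lt_r (hp : 0 < p) (hqinv : ((q:ℤ) * qinv) % (p:ℤ) = 1) (h0r : 0 < r) (hrp : r < p) :
    mIdx p r qinv < r := by
  have h1 := mIdx_succ (p := p) hp hqinv h0r hrp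
  have h2 := Finset.card_filter_le (Qset p r qinv) (fun x => x < Qp' p r qinv)
  rw [card_Qset hqinv hrp] at h2
  omega

lemma Qi_mIdx_lt (hp : 0 < p) (hqinv : ((q:ℤ) * qinv) % (p:ℤ) = 1) (h0r : 0 < r) (hrp : r < p) :
    Qi p r qinv (mIdx p r qinv) < Qp' p r qinv := by
  refine (count_iff (p := p) hqinv hrp (fun x => x < Qp' p r qinv)
    (fun a b hab hb => lt_of_le_of_lt hab hb) (mIdx_lt_r hp hqinv h0r hrp)).mp ?_
  rw [← mIdx_succ hp hqinv h0r hrp]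
  omega

lemma Qp'_le_Qi_succ (hp : 0 < p) (hqinv : ((q:ℤ) * qinv) % (p:ℤ) = 1) (h0r : 0 < r)
    (hrp : r < p) (hm : mIdx p r qinv + 1 < r) :
    Qp' p r qinv ≤ Qi p r qinv (mIdx p r qinv + 1) := by
  by_contra h
  push_neg at h
  have := (count_iff (p := p) hqinv hrp (fun x => x < Qp' p r qinv)
    (fun a b hab hb => lt_of_le_of_lt hab hb) hm).mpr h
  rw [← mIdx_succ hp hqinv h0r hrp] at this
  omega

lemma fQ_le_mIdx_succ (hp : 0 < p) (hqinv : ((q:ℤ) * qinv) % (p:ℤ) = 1) (h0r : 0 < r)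
    (hrp : r < p) {l : ℤ} (hl : l < Qp' p r qinv) :
    fQ p r qinv l ≤ mIdx p r qinv + 1 := by
  by_cases hm : mIdx p r qinv + 1 < r
  · by_contra h
    push_neg at h
    have h2 : Qi p r qinv (mIdx p r qinv + 1) ≤ l := by
      refine (count_iff (p := p) hqinv hrp (fun x => x ≤ l)
        (fun a b hab hb => hab.trans hb) hm).mp ?_
      simp only [fQ] at h
      omega
    have := Qp'_le_Qi_succ hp hqinv h0r hrp hm
    omega
  · have := fQ_le (p := p) hqinv hrp l
    omega

/-- `k̄' = #{l ∈ R : l < Q'}` -/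
lemma kbar'_card (hp : 0 < p) (hqinv : ((q:ℤ) * qinv) % (p:ℤ) = 1) (hqp : q < p)
    (hrp : r < p) (h0r : 0 < r) :
    kbar' p q r qinv = ((Rset p q qinv).filter fun l => l < Qp' p r qinv).card := by
  set m := mIdx p r qinv with hm
  have hmr : m < r := mIdx_lt_r hp hqinv h0r hrp
  have hQm : Qi p r qinv m < Qp' p r qinv := Qi_mIdx_lt hp hqinv h0r hrp
  have htot : ((Rset p q qinv).filter fun l => l < Qp' p r qinv).card
      = ∑ j ∈ Finset.Icc 1 (m+1),
          (((Rset p q qinv).filter fun l => l < Qp' p r qinv).filter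
            fun l => fQ p r qinv l = j).card := by
    refine Finset.card_eq_sum_card_fiberwise (fun l hl => ?_)
    rw [Finset.mem_coe, Finset.mem_filter] at hl
    rw [Finset.mem_coe, Finset.mem_Icc]
    exact ⟨fQ_pos hp hqinv hrp h0r (Rset_nonneg hp hl.1),
      fQ_le_mIdx_succ hp hqinv h0r hrp hl.2⟩
  rw [kbar', kbar, htot, Finset.sum_Icc_succ_top (by omega : 1 ≤ m + 1)]
  congr 1
  · refine Finset.sum_congr rfl fun j hj => ?_
    rw [Finset.mem_Icc] at hj
    have hjr : j < r := by omega
    rw [ki, if_neg (by omega)]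
    congr 1
    rw [Finset.filter_filter]
    ext l
    simp only [Finset.mem_filter]
    constructor
    · rintro ⟨hlR, hcond⟩
      have hlQ : l < Qp' p r qinv := by
        have : Qi p r qinv j ≤ Qi p r qinv m := Qi_mono hqinv hrp (by omega) hmr
        omega
      exact ⟨hlR, hlQ, (fQ_eq_iff_lt hqinv hrp hj.1 hjr l).mpr hcond⟩
    · rintro ⟨hlR, hlQ, hfj⟩
      exact ⟨hlR, (fQ_eq_iff_lt hqinv hrp hj.1 hjr l).mp hfj⟩
  · rw [k']
    congr 1
    rw [Finset.filter_filter]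
    ext l
    simp only [Finset.mem_filter]
    constructor
    · rintro ⟨hlR, hQml, hlQ⟩
      refine ⟨hlR, hlQ, ?_⟩
      have h1 := (count_iff (p := p) hqinv hrp (fun x => x ≤ l)
        (fun a b hab hb => hab.trans hb) hmr).mpr hQml
      have h2 := fQ_le_mIdx_succ hp hqinv h0r hrp hlQ
      simp only [fQ] at h2 ⊢
      omega
    · rintro ⟨hlR, hlQ, hfm⟩
      refine ⟨hlR, ?_, hlQ⟩
      refine (count_iff (p := p) hqinv hrp (fun x => x ≤ l)
        (fun a b hab hb => hab.trans hb) hmr).mp ?_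
      simp only [fQ] at hfm
      omega

lemma card_Rset_lt_Qp' (hp : 0 < p) (hqinv : ((q:ℤ) * qinv) % (p:ℤ) = 1) (hqp : q < p)
    (hrp : r < p) (h0r : 0 < r) (hq0 : 0 < q) :
    ((((Rset p q qinv).filter fun l => l < Qp' p r qinv).card : ℤ))
      = Qp' p r qinv * q / p := by
  have hp0 : ((p:ℤ)) ≠ 0 := by exact_mod_cast hp.ne'
  have hpz : (0:ℤ) < p := by exact_mod_cast hp
  have hqz : (0:ℤ) < q := by exact_mod_cast hq0
  have hqpz : (q:ℤ) < p := by exact_mod_cast hqp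
  have hQ0 : 0 < Qp' p r qinv := Qp'_pos hp hqinv h0r hrp
  have hQp : Qp' p r qinv < p := Qp'_lt hp
  have hset : (Rset p q qinv).filter (fun l => l < Qp' p r qinv)
      = (Finset.Ico (0:ℤ) (Qp' p r qinv)).filter
          (fun l => 1 ≤ (-(l*q)) % (p:ℤ) ∧ (-(l*q)) % (p:ℤ) ≤ q) := by
    ext l
    simp only [Finset.mem_filter, Finset.mem_Ico]
    constructor
    · rintro ⟨hR, hlt⟩
      have h0 := Rset_nonneg hp hR
      have hlp := Rset_lt hp hR
      exact ⟨⟨h0, hlt⟩, (mem_Rset_iff hqinv hqp h0 hlp).mp hR⟩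
    · rintro ⟨⟨h0, hlt⟩, hcond⟩
      exact ⟨(mem_Rset_iff hqinv hqp h0 (hlt.trans hQp)).mpr hcond, hlt⟩
  have hpt : ∀ l ∈ Finset.Ico (0:ℤ) (Qp' p r qinv),
      (if (1 ≤ (-(l*q)) % (p:ℤ) ∧ (-(l*q)) % (p:ℤ) ≤ q) then (1:ℤ) else 0)
        = (l+1)*q/p - l*q/p := by
    intro l hl
    rw [Finset.mem_Ico] at hl
    rcases eq_or_lt_of_le hl.1 with h0 | h0
    · rw [← h0]
      norm_num
      exact (Int.ediv_eq_zero_of_lt (by positivity) hqpz).symm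
    · have hlp : l < (p:ℤ) := hl.2.trans hQp
      set a := l * (q:ℤ) % p with ha
      have ha0 : 0 ≤ a := Int.emod_nonneg _ hp0
      have hap : a < p := Int.emod_lt_of_pos _ hpz
      have hane : a ≠ 0 := by
        intro h
        have e1 : (l * q * qinv) % (p:ℤ) = 0 := by
          rw [← emod_mul_cancel (p:ℤ) (l*q) qinv, ← ha, h]
          simp
        rw [hB hqinv, Int.emod_eq_of_lt hl.1 hlp] at e1
        omega
      have hneg : (-(l*(q:ℤ))) % p = p - a := by
        rw [← emod_neg_cancel (p:ℤ) (l*q), ← ha]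
        rw [Int.emod_eq_emod_iff_emod_sub_eq_zero.mpr (by
          have : (-a - ((p:ℤ) - a)) = (p:ℤ) * (-1) := by ring
          rw [this, Int.mul_emod_right])]
        exact Int.emod_eq_of_lt (by omega) (by omega)
      have hdiv : (l+1)*(q:ℤ)/p - l*q/p = (a + q)/p := by
        have hde := Int.mul_ediv_add_emod (l*(q:ℤ)) p
        rw [← ha] at hde
        have h1 : (l+1)*(q:ℤ) = (a + q) + (p:ℤ)*(l*q/p) := by linarith [hde]
        rw [h1, Int.add_mul_ediv_left _ _ hp0]
        ring
      rw [hneg, hdiv]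
      by_cases hcase : (p:ℤ) - q ≤ a
      · rw [if_pos ⟨by omega, by omega⟩]
        have h2 : a + (q:ℤ) = (a + q - p) + (p:ℤ)*1 := by ring
        rw [h2, Int.add_mul_ediv_left _ _ hp0,
          Int.ediv_eq_zero_of_lt (by omega) (by omega)]
        norm_num
      · rw [if_neg (by omega)]
        exact (Int.ediv_eq_zero_of_lt (by omega) (by omega)).symm
  have himg : Finset.Ico (0:ℤ) (Qp' p r qinv)
      = (Finset.range (Qp' p r qinv).toNat).image (fun i : ℕ => (i:ℤ)) := by
    ext x
    simp only [Finset.mem_Ico, Finset.mem_image, Finset.mem_range]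
    constructor
    · rintro ⟨h1, h2⟩
      exact ⟨x.toNat, by omega, by omega⟩
    · rintro ⟨i, hi, rfl⟩
      omega
  rw [hset, Finset.card_filter]
  push_cast
  rw [Finset.sum_congr rfl hpt, himg,
    Finset.sum_image (fun a _ b _ h => by exact_mod_cast h)]
  have hg : ∀ i : ℕ, ((i:ℤ)+1)*q/p - (i:ℤ)*q/p
      = (fun j : ℕ => ((j:ℤ)*q/p)) (i+1) - (fun j : ℕ => ((j:ℤ)*q/p)) i := by
    intro i
    push_cast
    ring_nf
  rw [Finset.sum_congr rfl (fun i _ => hg i), Finset.sum_range_sub (fun j : ℕ => ((j:ℤ)*q/p))]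
  have : (((Qp' p r qinv).toNat : ℤ)) = Qp' p r qinv := by omega
  rw [this]
  simp

/-- Lemma B : `Q'·q = r + k̄'·p` -/
lemma lemB (hp : 0 < p) (hqinv : ((q:ℤ) * qinv) % (p:ℤ) = 1) (hqp : q < p)
    (hrp : r < p) (h0r : 0 < r) (hq0 : 0 < q) :
    Qp' p r qinv * q = (r:ℤ) + (kbar' p q r qinv : ℤ) * p := by
  have h1 := Int.mul_ediv_add_emod (Qp' p r qinv * q) p
  rw [Qp'_mul_q_mod hqinv hrp] at h1
  have h2 : ((kbar' p q r qinv : ℤ)) = Qp' p r qinv * q / p := by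
    rw [kbar'_card hp hqinv hqp hrp h0r]
    exact card_Rset_lt_Qp' hp hqinv hqp hrp h0r hq0
  rw [h2]
  linarith

lemma one_sub_X_zpow_ne {n : ℕ} (hn : 0 < n) : (1 - RatFunc.X ^ (n:ℤ) : RatFunc ℚ) ≠ 0 := by
  rw [sub_ne_zero, zpow_natCast]
  intro h
  have h2 : algebraMap (Polynomial ℚ) (RatFunc ℚ) (Polynomial.X ^ n) =
      algebraMap (Polynomial ℚ) (RatFunc ℚ) 1 := by
    rw [map_pow, RatFunc.algebraMap_X, map_one, ← h]
  have h3 := RatFunc.algebraMap_injective ℚ h2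
  have h4 := congrArg Polynomial.natDegree h3
  simp [Polynomial.natDegree_X_pow] at h4
  omega

lemma key_field {K : Type*} [Field K] (u v w E F S1 Sm U1 Tm : K)
    (hu : 1 - u ≠ 0) (hv : 1 - v ≠ 0) :
    u * (1 - (1-w)*Tm - v*F) / (1-u) * ((1-w)/(1-v) * (w*(U1+E)) - w * ((1-w)/(1-v) * (S1+E)))
    + u * (1 - (1-w)*U1 - E) / (1-u) * (((1-w)/(1-v) * Sm + F) * w - w*Tm * ((1-w)/(1-v)))
    = u*w / ((1-u)*(1-v)) * ((1 - (1-w)*Tm - v*F) * (1 - (1-w)*S1 - E)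
        - (1 - (1-w)*Sm - F) * (1 - (1-w)*U1 - E)) := by
  field_simp
  ring

end main
end TTKaux
open TTKaux


theorem stmt8 (p q r : ℕ) (qinv s : ℤ) (hcop : Nat.Coprime p q)
    (hq0 : 0 < q) (hqp : q < p) (hr1 : 1 < r) (hrp : r < p)
    (hqinv : ((q : ℤ) * qinv) % (p : ℤ) = 1) :
    minor1 p q r qinv s =
      RatFunc.X ^ ((q : ℤ) + (r : ℤ) * s) /
          ((1 - RatFunc.X ^ (q : ℤ)) * (1 - RatFunc.X ^ (r : ℤ))) *
        (YYt p q r qinv s * XX p q r qinv s - XXt p q r qinv s * YY p q r qinv s) := by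
  have hp : 0 < p := by omega
  have h0r : 0 < r := by omega
  have hX : (RatFunc.X : RatFunc ℚ) ≠ 0 := RatFunc.X_ne_zero
  have hu : (1 - RatFunc.X ^ (q:ℤ) : RatFunc ℚ) ≠ 0 := one_sub_X_zpow_ne hq0
  have hv : (1 - RatFunc.X ^ (r:ℤ) : RatFunc ℚ) ≠ 0 := one_sub_X_zpow_ne (by omega)
  -- split the `a32` sum and identify its top term with `E`
  have h32 : (∑ i ∈ Finset.Icc 1 r,
        (RatFunc.X : RatFunc ℚ) ^ ((kbar p q r qinv i : ℤ) * (p:ℤ) + ((i:ℤ)-1)*((r:ℤ)*s)))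
      = (∑ i ∈ Finset.Icc 1 (r-1),
          (RatFunc.X : RatFunc ℚ) ^ ((kbar p q r qinv i : ℤ) * (p:ℤ) + ((i:ℤ)-1)*((r:ℤ)*s)))
        + RatFunc.X ^ ((p:ℤ)*(q:ℤ) + ((r:ℤ)-1)*((r:ℤ)*s)) := by
    have hr' : r - 1 + 1 = r := by omega
    have h := Finset.sum_Icc_succ_top (a := 1) (b := r-1) (by omega)
      (f := fun i : ℕ => (RatFunc.X : RatFunc ℚ) ^
        ((kbar p q r qinv i : ℤ) * (p:ℤ) + ((i:ℤ)-1)*((r:ℤ)*s)))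
    rw [hr'] at h
    rw [h]
    congr 2
    rw [kbar_r_eq hp hqinv hqp hrp h0r]
    push_cast
    ring
  -- split the `a34` sum
  have h34 : (∑ i ∈ Finset.Icc 1 r,
        (RatFunc.X : RatFunc ℚ) ^ (QiE p r qinv i * (q:ℤ) + (i:ℤ)*((r:ℤ)*s)))
      = RatFunc.X ^ ((r:ℤ)*s) *
        ((∑ i ∈ Finset.Icc 1 (r-1),
          (RatFunc.X : RatFunc ℚ) ^ (Qi p r qinv i * (q:ℤ) + ((i:ℤ)-1)*((r:ℤ)*s)))
         + RatFunc.X ^ ((p:ℤ)*(q:ℤ) + ((r:ℤ)-1)*((r:ℤ)*s))) := by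
    have hr' : r - 1 + 1 = r := by omega
    have h := Finset.sum_Icc_succ_top (a := 1) (b := r-1) (by omega)
      (f := fun i : ℕ => (RatFunc.X : RatFunc ℚ) ^ (QiE p r qinv i * (q:ℤ) + (i:ℤ)*((r:ℤ)*s)))
    rw [hr'] at h
    rw [h, mul_add, Finset.mul_sum]
    congr 1
    · refine Finset.sum_congr rfl fun i hi => ?_
      rw [Finset.mem_Icc] at hi
      rw [QiE, if_neg (by omega), ← zpow_add₀ hX]
      congr 1
      push_cast
      ring
    · rw [QiE, if_pos rfl, ← zpow_add₀ hX]
      congr 1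
      push_cast
      ring
  -- identify the trailing term of `Ỹ` with `v * F`
  have hG : (RatFunc.X : RatFunc ℚ) ^ (Qp' p r qinv * (q:ℤ) + (mIdx p r qinv : ℤ)*((r:ℤ)*s))
      = RatFunc.X ^ ((r:ℤ)) *
        RatFunc.X ^ ((kbar' p q r qinv : ℤ) * (p:ℤ) + (mIdx p r qinv : ℤ)*((r:ℤ)*s)) := by
    rw [← zpow_add₀ hX]
    congr 1
    rw [lemB hp hqinv hqp hrp h0r hq0]
    ring
  have hqrs : (RatFunc.X : RatFunc ℚ) ^ ((q:ℤ) + (r:ℤ)*s)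
      = RatFunc.X ^ ((q:ℤ)) * RatFunc.X ^ ((r:ℤ)*s) := by
    rw [← zpow_add₀ hX]
  rw [minor1, a13, a33, a22, a24, a12, a14, a32, a34, XX, XXt, YY, YYt, h32, h34, hG, hqrs]
  exact key_field _ _ _ _ _ _ _ _ _ hu hv
end
end

section
/- (1−t^r)·m₁ = −(1−t^p)·m₂ in ℚ(t). -/
open Finset

noncomputable section

open TTK


section Auxiliary

open TTK

private lemma one_sub_X_zpow_ne (n : ℕ) (hn : 0 < n) :
    (1 : RatFunc ℚ) - RatFunc.X ^ (n : ℤ) ≠ 0 := by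
  rw [sub_ne_zero, zpow_natCast]
  intro h
  have h2 : (algebraMap (Polynomial ℚ) (RatFunc ℚ)) (1 : Polynomial ℚ)
      = algebraMap (Polynomial ℚ) (RatFunc ℚ) (Polynomial.X ^ n) := by
    rw [map_one, map_pow, RatFunc.algebraMap_X, ← h]
  have h3 := RatFunc.algebraMap_injective ℚ h2
  have h4 := congrArg Polynomial.natDegree h3
  simp [Polynomial.natDegree_X_pow] at h4
  omega

private lemma filter_between (S : Finset ℤ) {a b : ℤ} (hab : a ≤ b) :
    (S.filter fun l => a ≤ l ∧ l < b).card + (S.filter fun l => l < a).card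
      = (S.filter fun l => l < b).card := by
  classical
  have h1 : (S.filter fun l => l < b)
      = (S.filter fun l => a ≤ l ∧ l < b) ∪ (S.filter fun l => l < a) := by
    rw [← Finset.filter_or]
    apply Finset.filter_congr
    intro x _
    constructor
    · intro hx
      by_cases hxa : a ≤ x
      · exact Or.inl ⟨hxa, hx⟩
      · exact Or.inr (by omega)
    · rintro (⟨_, hx⟩ | hx) <;> omega
  rw [h1, Finset.card_union_of_disjoint]
  rw [Finset.disjoint_left]
  intro x hx1 hx2
  rw [Finset.mem_filter] at hx1 hx2
  omega

private lemma mem_Rset_iff {p q : ℕ} {qinv : ℤ} (hq0 : 0 < q) (hqp : q < p)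
    (hqinv : ((q : ℤ) * qinv) % (p : ℤ) = 1) (l : ℤ) :
    l ∈ Rset p q qinv ↔ 0 ≤ l ∧ l < p ∧ (p : ℤ) - q ≤ l * q % p := by
  have hp0 : (0:ℤ) < p := by exact_mod_cast hq0.trans hqp
  have hp1 : (1:ℤ) < p := by
    have : 1 < p := by omega
    exact_mod_cast this
  have hq1 : Int.ModEq (p:ℤ) ((q:ℤ)*qinv) 1 := by
    show ((q:ℤ)*qinv) % p = 1 % p
    rw [hqinv, Int.emod_eq_of_lt (by norm_num) hp1]
  constructor
  · intro hl
    obtain ⟨n, hn, rfl⟩ := Finset.mem_image.1 hl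
    rw [Finset.mem_Icc] at hn
    have h0 : (0:ℤ) < n := by exact_mod_cast hn.1
    have h1 : (n:ℤ) ≤ q := by exact_mod_cast hn.2
    refine ⟨Int.emod_nonneg _ hp0.ne', Int.emod_lt_of_pos _ hp0, ?_⟩
    have hres : Int.ModEq (p:ℤ) (res p (-(n:ℤ) * qinv)) (-(n:ℤ) * qinv) :=
      Int.emod_emod_of_dvd _ dvd_rfl
    have e1 : Int.ModEq (p:ℤ) (res p (-(n:ℤ) * qinv) * (q:ℤ)) ((p:ℤ) - n) := by
      calc res p (-(n:ℤ) * qinv) * (q:ℤ)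
          ≡ (-(n:ℤ) * qinv) * q [ZMOD (p:ℤ)] := hres.mul_right _
        _ = (-(n:ℤ)) * ((q:ℤ) * qinv) := by ring
        _ ≡ (-(n:ℤ)) * 1 [ZMOD (p:ℤ)] := Int.ModEq.mul_left _ hq1
        _ = -(n:ℤ) := by ring
        _ ≡ (p:ℤ) - n [ZMOD (p:ℤ)] := Int.modEq_iff_dvd.2 ⟨1, by ring⟩
    have e2 : res p (-(n:ℤ) * qinv) * (q:ℤ) % p = (p:ℤ) - n := by
      have := e1
      unfold Int.ModEq at this
      rw [this, Int.emod_eq_of_lt (by omega) (by omega)]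
    rw [e2]
    omega
  · rintro ⟨hl0, hlp, hcond⟩
    have hm0 : 0 ≤ l * q % p := Int.emod_nonneg _ hp0.ne'
    have hmp : l * q % p < p := Int.emod_lt_of_pos _ hp0
    refine Finset.mem_image.2 ⟨((p:ℤ) - l * q % p).toNat, ?_, ?_⟩
    · rw [Finset.mem_Icc]
      constructor <;> omega
    · have hcast : ((((p:ℤ) - l * q % p).toNat : ℤ)) = (p:ℤ) - l * q % p :=
        Int.toNat_of_nonneg (by omega)
      have key : Int.ModEq (p:ℤ) (-((((p:ℤ) - l * q % p).toNat : ℤ)) * qinv) l := by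
        rw [hcast]
        calc -((p:ℤ) - l * q % p) * qinv
            = (l * q % p) * qinv + (p:ℤ) * (-qinv) := by ring
          _ ≡ (l * q % p) * qinv [ZMOD (p:ℤ)] := Int.modEq_iff_dvd.2 ⟨qinv, by ring⟩
          _ ≡ (l * q) * qinv [ZMOD (p:ℤ)] :=
              Int.ModEq.mul_right _ (Int.emod_emod_of_dvd _ dvd_rfl)
          _ = l * ((q:ℤ) * qinv) := by ring
          _ ≡ l * 1 [ZMOD (p:ℤ)] := Int.ModEq.mul_left _ hq1
          _ = l := by ring
      show res p _ = l
      unfold res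
      unfold Int.ModEq at key
      rw [key, Int.emod_eq_of_lt hl0 hlp]

private lemma cnt_nat {p q : ℕ} (hq0 : 0 < q) (hqp : q < p) (b : ℕ) :
    ((((Finset.Ico (0:ℤ) (b:ℤ)).filter (fun l => (p:ℤ) - q ≤ l * q % p)).card : ℤ))
      = (b:ℤ) * q / p := by
  have hp0 : (0:ℤ) < p := by exact_mod_cast hq0.trans hqp
  induction b with
  | zero => simp
  | succ b ih =>
    have hins : Finset.Ico (0:ℤ) ((b+1 : ℕ) : ℤ) = insert (b:ℤ) (Finset.Ico (0:ℤ) (b:ℤ)) := by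
      ext x
      simp only [Finset.mem_Ico, Finset.mem_insert]
      push_cast
      omega
    rw [hins, Finset.filter_insert]
    have hb_notmem : (b:ℤ) ∉ (Finset.Ico (0:ℤ) (b:ℤ)).filter (fun l => (p:ℤ) - q ≤ l * q % p) := by
      simp [Finset.mem_Ico]
    have h1 := Int.mul_ediv_add_emod ((b:ℤ)*q) p
    have hm0 : 0 ≤ (b:ℤ)*q % p := Int.emod_nonneg _ hp0.ne'
    have hmp : (b:ℤ)*q % p < p := Int.emod_lt_of_pos _ hp0
    split_ifs with hc
    · rw [Finset.card_insert_of_notMem hb_notmem]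
      have key : ((b:ℤ)+1)*q/p = (b:ℤ)*q/p + 1 := by
        have h2 : ((b:ℤ)+1)*q = ((b:ℤ)*q % p + q - p) + p * ((b:ℤ)*q / p + 1) := by
          linear_combination -h1
        rw [h2, Int.add_mul_ediv_left _ _ hp0.ne',
          Int.ediv_eq_zero_of_lt (by linarith) (by linarith)]
        ring
      push_cast
      rw [ih]
      linarith [key]
    · push_neg at hc
      have key : ((b:ℤ)+1)*q/p = (b:ℤ)*q/p := by
        have h2 : ((b:ℤ)+1)*q = ((b:ℤ)*q % p + q) + p * ((b:ℤ)*q / p) := by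
          linear_combination -h1
        rw [h2, Int.add_mul_ediv_left _ _ hp0.ne',
          Int.ediv_eq_zero_of_lt (by linarith) (by linarith)]
        ring
      push_cast
      rw [ih]
      linarith [key]

private lemma card_R_below {p q : ℕ} {qinv : ℤ} (hq0 : 0 < q) (hqp : q < p)
    (hqinv : ((q : ℤ) * qinv) % (p : ℤ) = 1) (B : ℤ) (hB0 : 0 ≤ B) (hBp : B ≤ p) :
    (((Rset p q qinv).filter (fun l => l < B)).card : ℤ) = B * q / p := by
  have hfe : (Rset p q qinv).filter (fun l => l < B)
      = (Finset.Ico (0:ℤ) B).filter (fun l => (p:ℤ) - q ≤ l * q % p) := by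
    ext l
    simp only [Finset.mem_filter, Finset.mem_Ico, mem_Rset_iff hq0 hqp hqinv]
    constructor
    · rintro ⟨⟨h1, h2, h3⟩, h4⟩; exact ⟨⟨h1, h4⟩, h3⟩
    · rintro ⟨⟨h1, h4⟩, h3⟩; exact ⟨⟨h1, by linarith, h3⟩, h4⟩
  rw [hfe]
  obtain ⟨b, rfl⟩ : ∃ b : ℕ, B = (b:ℤ) := ⟨B.toNat, (Int.toNat_of_nonneg hB0).symm⟩
  exact cnt_nat hq0 hqp b

end Auxiliary

section Facts

open TTK

private lemma facts (p q r : ℕ) (qinv : ℤ)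
    (hq0 : 0 < q) (hqp : q < p) (hr1 : 1 < r) (hrp : r < p)
    (hqinv : ((q : ℤ) * qinv) % (p : ℤ) = 1) :
    kbar p q r qinv r = q ∧
      Qp' p r qinv * (q:ℤ) = (kbar' p q r qinv : ℤ) * p + r := by
  have hp0 : (0:ℤ) < p := by exact_mod_cast hq0.trans hqp
  have hp1 : (1:ℤ) < p := by exact_mod_cast hr1.trans hrp
  have hq1 : Int.ModEq (p:ℤ) ((q:ℤ)*qinv) 1 := by
    show ((q:ℤ)*qinv) % p = 1 % p
    rw [hqinv, Int.emod_eq_of_lt (by norm_num) hp1]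
  -- coprimality of p and qinv
  have hco : IsCoprime (p:ℤ) qinv := by
    have h := Int.mul_ediv_add_emod ((q:ℤ)*qinv) p
    rw [hqinv] at h
    exact ⟨-(((q:ℤ)*qinv)/p), q, by linear_combination -h⟩
  -- cardinality of Qset
  have hQcard : (Qset p r qinv).card = r := by
    rw [Qset, Finset.card_image_of_injOn, Finset.card_range]
    intro a ha b hb hab
    simp only [Finset.coe_range, Set.mem_Iio] at ha hb
    have hmod : ((a:ℤ) * qinv) % p = ((b:ℤ) * qinv) % p := hab
    have hdvd : (p:ℤ) ∣ ((b:ℤ) - a) * qinv := by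
      have h2 : (p:ℤ) ∣ (b:ℤ) * qinv - (a:ℤ) * qinv := Int.ModEq.dvd hmod
      have h3 : ((b:ℤ) - a) * qinv = (b:ℤ) * qinv - (a:ℤ) * qinv := by ring
      rwa [h3]
    have hdvd2 : (p:ℤ) ∣ ((b:ℤ) - a) := hco.dvd_of_dvd_mul_right hdvd
    have hz : ((b:ℤ) - a) = 0 := by
      refine Int.eq_zero_of_dvd_of_natAbs_lt_natAbs hdvd2 ?_
      simp only [Int.natAbs_natCast]
      omega
    omega
  -- sorted list basics
  have hlen : ((Qset p r qinv).sort (· ≤ ·)).length = r := by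
    rw [Finset.length_sort, hQcard]
  have hQi_get : ∀ i (h : i < r), Qi p r qinv i =
      ((Qset p r qinv).sort (· ≤ ·))[i]'(by rw [hlen]; exact h) := by
    intro i h
    exact List.getD_eq_getElem _ _ (by rw [hlen]; exact h)
  have hpair := List.pairwise_iff_getElem.1 (Finset.pairwise_sort (Qset p r qinv) (· ≤ ·))
  have hmono : ∀ i j, i ≤ j → j < r → Qi p r qinv i ≤ Qi p r qinv j := by
    intro i j hij hj
    rcases eq_or_lt_of_le hij with rfl | hlt
    · exact le_refl _
    · rw [hQi_get i (lt_of_lt_of_le hlt (le_of_lt hj)), hQi_get j hj]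
      exact hpair i j (by rw [hlen]; omega) (by rw [hlen]; exact hj) hlt
  have hmem : ∀ i, i < r → Qi p r qinv i ∈ Qset p r qinv := by
    intro i h
    rw [hQi_get i h]
    exact (Finset.mem_sort _).1 (List.getElem_mem _)
  have hsurj : ∀ y ∈ Qset p r qinv, ∃ i, ∃ _ : i < r, Qi p r qinv i = y := by
    intro y hy
    have hy2 : y ∈ (Qset p r qinv).sort (· ≤ ·) := (Finset.mem_sort _).2 hy
    obtain ⟨n, hn, he⟩ := List.mem_iff_getElem.1 hy2
    exact ⟨n, by rw [hlen] at hn; exact hn, by rw [hQi_get n (by rw [hlen] at hn; exact hn)]; exact he⟩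
  have hQb : ∀ y ∈ Qset p r qinv, 0 ≤ y ∧ y < p := by
    intro y hy
    obtain ⟨n, _, rfl⟩ := Finset.mem_image.1 hy
    exact ⟨Int.emod_nonneg _ hp0.ne', Int.emod_lt_of_pos _ hp0⟩
  have hzero : (0:ℤ) ∈ Qset p r qinv := by
    refine Finset.mem_image.2 ⟨0, Finset.mem_range.2 (by omega), ?_⟩
    simp [res]
  have hQi0 : Qi p r qinv 0 = 0 := by
    obtain ⟨i, hi, hQi⟩ := hsurj 0 hzero
    have h1 : Qi p r qinv 0 ≤ 0 := hQi ▸ hmono 0 i (Nat.zero_le _) hi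
    have h2 : 0 ≤ Qi p r qinv 0 := (hQb _ (hmem 0 (by omega))).1
    omega
  -- Q' facts
  have hQ'0 : 0 ≤ Qp' p r qinv := Int.emod_nonneg _ hp0.ne'
  have hQ'p : Qp' p r qinv < p := Int.emod_lt_of_pos _ hp0
  have hQ'pos : 0 < Qp' p r qinv := by
    rcases lt_or_eq_of_le hQ'0 with h | h
    · exact h
    · exfalso
      have hdvd : (p:ℤ) ∣ (r:ℤ) * qinv := Int.dvd_of_emod_eq_zero h.symm
      have hdvd2 : (p:ℤ) ∣ (r:ℤ) := hco.dvd_of_dvd_mul_right hdvd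
      have := Int.le_of_dvd (by exact_mod_cast hr1.trans' one_pos) hdvd2
      have hrp' : (r:ℤ) < p := by exact_mod_cast hrp
      omega
  -- kbar partial sums
  have hRb : ∀ l ∈ Rset p q qinv, 0 ≤ l ∧ l < p := by
    intro l hl
    have := (mem_Rset_iff hq0 hqp hqinv l).1 hl
    exact ⟨this.1, this.2.1⟩
  have hc0 : ((Rset p q qinv).filter (fun l => l < (0:ℤ))).card = 0 := by
    rw [Finset.card_eq_zero, Finset.filter_eq_empty_iff]
    intro l hl
    have := (hRb l hl).1
    omega
  have hkbarc : ∀ i, i < r → kbar p q r qinv i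
      = ((Rset p q qinv).filter (fun l => l < Qi p r qinv i)).card := by
    intro i
    induction i with
    | zero =>
      intro _
      rw [hQi0]
      simp [kbar, hc0]
    | succ i ih =>
      intro hir
      have hi : i < r := by omega
      have hsplit : kbar p q r qinv (i+1) = kbar p q r qinv i + ki p q r qinv (i+1) :=
        Finset.sum_Icc_succ_top (by omega) _
      have hki : ki p q r qinv (i+1)
          = ((Rset p q qinv).filter
              (fun l => Qi p r qinv i ≤ l ∧ l < Qi p r qinv (i+1))).card := by
        rw [ki, if_neg (by omega)]
        simp
      have hfb := filter_between (Rset p q qinv) (hmono i (i+1) (by omega) hir)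
      rw [hsplit, hki, ih hi]
      omega
  -- total count
  have hcp : ((Rset p q qinv).filter (fun l => l < (p:ℤ))).card = q := by
    have := card_R_below hq0 hqp hqinv (p:ℤ) (by positivity) (le_refl _)
    rw [Int.mul_ediv_cancel_left _ hp0.ne'] at this
    exact_mod_cast this
  -- Fact A
  have factA : kbar p q r qinv r = q := by
    obtain ⟨r', rfl⟩ : ∃ r', r = r' + 1 := ⟨r - 1, by omega⟩
    have hsplit : kbar p q (r'+1) qinv (r'+1) = kbar p q (r'+1) qinv r' + ki p q (r'+1) qinv (r'+1) :=
      Finset.sum_Icc_succ_top (by omega) _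
    have hki : ki p q (r'+1) qinv (r'+1)
        = ((Rset p q qinv).filter (fun l => Qi p (r'+1) qinv r' ≤ l)).card := by
      rw [ki, if_pos rfl]
      simp
    have hfe : (Rset p q qinv).filter (fun l => Qi p (r'+1) qinv r' ≤ l)
        = (Rset p q qinv).filter (fun l => Qi p (r'+1) qinv r' ≤ l ∧ l < (p:ℤ)) := by
      apply Finset.filter_congr
      intro x hx
      have := (hRb x hx).2
      constructor
      · intro h; exact ⟨h, this⟩
      · intro h; exact h.1
    have hQr'p : Qi p (r'+1) qinv r' ≤ (p:ℤ) := le_of_lt (hQb _ (hmem r' (by omega))).2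
    have hfb := filter_between (Rset p q qinv) hQr'p
    have hkb := hkbarc r' (by omega)
    rw [hsplit, hki, hfe, hkb, hcp] at *
    omega
  -- m index facts
  have hmidx : mIdx p r qinv = ((Qset p r qinv).filter fun x => x < Qp' p r qinv).card - 1 := rfl
  have hFpos : 0 < ((Qset p r qinv).filter fun x => x < Qp' p r qinv).card := by
    rw [Finset.card_pos]
    exact ⟨0, Finset.mem_filter.2 ⟨hzero, hQ'pos⟩⟩
  have hFle : ((Qset p r qinv).filter fun x => x < Qp' p r qinv).card ≤ r := by
    calc ((Qset p r qinv).filter fun x => x < Qp' p r qinv).card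
        ≤ (Qset p r qinv).card := Finset.card_filter_le _ _
      _ = r := hQcard
  have hmr : mIdx p r qinv < r := by omega
  have hQm : Qi p r qinv (mIdx p r qinv) < Qp' p r qinv := by
    by_contra hle
    push_neg at hle
    have hsub : ((Qset p r qinv).filter fun x => x < Qp' p r qinv)
        ⊆ (Finset.range (mIdx p r qinv)).image (Qi p r qinv) := by
      intro y hy
      rw [Finset.mem_filter] at hy
      obtain ⟨j, hj, rfl⟩ := hsurj y hy.1
      refine Finset.mem_image.2 ⟨j, Finset.mem_range.2 ?_, rfl⟩
      by_contra hjm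
      push_neg at hjm
      have := hmono (mIdx p r qinv) j hjm hj
      omega
    have hle2 := (Finset.card_le_card hsub).trans
      (Finset.card_image_le.trans (le_of_eq (Finset.card_range _)))
    omega
  -- Fact B
  have hk' : k' p q r qinv
      + ((Rset p q qinv).filter (fun l => l < Qi p r qinv (mIdx p r qinv))).card
      = ((Rset p q qinv).filter (fun l => l < Qp' p r qinv)).card :=
    filter_between (Rset p q qinv) (le_of_lt hQm)
  have hkbar' : (kbar' p q r qinv : ℤ)
      = (((Rset p q qinv).filter (fun l => l < Qp' p r qinv)).card : ℤ) := by
    have := hkbarc (mIdx p r qinv) hmr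
    rw [kbar', this]
    push_cast
    omega
  have hcQ' : (((Rset p q qinv).filter (fun l => l < Qp' p r qinv)).card : ℤ)
      = Qp' p r qinv * q / p :=
    card_R_below hq0 hqp hqinv _ hQ'0 (le_of_lt hQ'p)
  have hmodr : Qp' p r qinv * (q:ℤ) % p = r := by
    have hres : Int.ModEq (p:ℤ) (Qp' p r qinv) ((r:ℤ) * qinv) :=
      Int.emod_emod_of_dvd _ dvd_rfl
    have e1 : Int.ModEq (p:ℤ) (Qp' p r qinv * (q:ℤ)) (r:ℤ) := by
      calc Qp' p r qinv * (q:ℤ)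
          ≡ ((r:ℤ) * qinv) * q [ZMOD (p:ℤ)] := hres.mul_right _
        _ = (r:ℤ) * ((q:ℤ) * qinv) := by ring
        _ ≡ (r:ℤ) * 1 [ZMOD (p:ℤ)] := Int.ModEq.mul_left _ hq1
        _ = (r:ℤ) := by ring
    unfold Int.ModEq at e1
    rw [e1, Int.emod_eq_of_lt (by positivity) (by exact_mod_cast hrp)]
  have factB : Qp' p r qinv * (q:ℤ) = (kbar' p q r qinv : ℤ) * p + r := by
    have h := Int.mul_ediv_add_emod (Qp' p r qinv * (q:ℤ)) p
    rw [hmodr] at h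
    rw [hkbar', hcQ']
    linarith
  exact ⟨factA, factB⟩

end Facts

section Algebra

open TTK

private lemma E1lem (p q r : ℕ) (qinv s : ℤ) (hr1 : 1 ≤ r)
    (hkr : kbar p q r qinv r = q) :
    (1 - RatFunc.X ^ ((r : ℤ) * s)) * a34 p q r qinv s
      - RatFunc.X ^ ((r : ℤ) * s) * ((1 - RatFunc.X ^ ((r : ℤ) * s)) *
          ∑ i ∈ Finset.Icc 1 r,
            RatFunc.X ^ ((kbar p q r qinv i : ℤ) * (p : ℤ) + ((i : ℤ) - 1) * ((r : ℤ) * s)))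
    = RatFunc.X ^ ((r : ℤ) * s) * XX p q r qinv s
      - RatFunc.X ^ ((r : ℤ) * s) * YY p q r qinv s := by
  have hX0 : (RatFunc.X : RatFunc ℚ) ≠ 0 := RatFunc.X_ne_zero
  obtain ⟨r', rfl⟩ : ∃ r', r = r' + 1 := ⟨r - 1, by omega⟩
  unfold XX YY a34
  simp only [Nat.add_sub_cancel]
  rw [Finset.sum_Icc_succ_top (by omega : 1 ≤ r' + 1)
      (fun i => (RatFunc.X : RatFunc ℚ) ^ (QiE p (r'+1) qinv i * (q : ℤ) + (i : ℤ) * (((r'+1 : ℕ) : ℤ) * s))),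
    Finset.sum_Icc_succ_top (by omega : 1 ≤ r' + 1)
      (fun i => (RatFunc.X : RatFunc ℚ) ^ ((kbar p q (r'+1) qinv i : ℤ) * (p : ℤ) + ((i : ℤ) - 1) * (((r'+1 : ℕ) : ℤ) * s)))]
  have hA : (∑ i ∈ Finset.Icc 1 r', (RatFunc.X : RatFunc ℚ) ^ (QiE p (r'+1) qinv i * (q : ℤ) + (i : ℤ) * (((r'+1 : ℕ) : ℤ) * s)))
      = ∑ i ∈ Finset.Icc 1 r', (RatFunc.X : RatFunc ℚ) ^ (Qi p (r'+1) qinv i * (q : ℤ) + (i : ℤ) * (((r'+1 : ℕ) : ℤ) * s)) := by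
    refine Finset.sum_congr rfl fun i hi => ?_
    rw [Finset.mem_Icc] at hi
    rw [QiE, if_neg (by omega)]
  rw [hA]
  rw [show QiE p (r'+1) qinv (r'+1) = (p:ℤ) from by rw [QiE, if_pos rfl]]
  rw [hkr]
  have hQshift : RatFunc.X ^ (((r'+1 : ℕ) : ℤ) * s) *
      ∑ i ∈ Finset.Icc 1 r', (RatFunc.X : RatFunc ℚ) ^ (Qi p (r'+1) qinv i * (q : ℤ) + ((i : ℤ) - 1) * (((r'+1 : ℕ) : ℤ) * s))
      = ∑ i ∈ Finset.Icc 1 r', (RatFunc.X : RatFunc ℚ) ^ (Qi p (r'+1) qinv i * (q : ℤ) + (i : ℤ) * (((r'+1 : ℕ) : ℤ) * s)) := by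
    rw [Finset.mul_sum]
    refine Finset.sum_congr rfl fun i _ => ?_
    rw [← zpow_add₀ hX0]
    congr 1
    push_cast
    ring
  have hsingle : RatFunc.X ^ (((r'+1 : ℕ) : ℤ) * s) *
      (RatFunc.X : RatFunc ℚ) ^ (((q:ℕ) : ℤ) * (p : ℤ) + (((r'+1 : ℕ) : ℤ) - 1) * (((r'+1 : ℕ) : ℤ) * s))
      = (RatFunc.X : RatFunc ℚ) ^ ((p : ℤ) * (q : ℤ) + ((r'+1 : ℕ) : ℤ) * (((r'+1 : ℕ) : ℤ) * s)) := by
    rw [← zpow_add₀ hX0]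
    congr 1
    push_cast
    ring
  linear_combination (-(1 - (RatFunc.X : RatFunc ℚ) ^ (((r'+1 : ℕ) : ℤ) * s))) * hQshift
    - (1 - (RatFunc.X : RatFunc ℚ) ^ (((r'+1 : ℕ) : ℤ) * s)) * hsingle

private lemma E2lem (p q r : ℕ) (qinv s : ℤ)
    (hB : Qp' p r qinv * (q:ℤ) = (kbar' p q r qinv : ℤ) * p + r) :
    (1 - RatFunc.X ^ ((r : ℤ) * s)) *
        (∑ i ∈ Finset.Icc 1 (mIdx p r qinv),
          RatFunc.X ^ ((kbar p q r qinv i : ℤ) * (p : ℤ) + ((i : ℤ) - 1) * ((r : ℤ) * s)))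
      + (1 - RatFunc.X ^ (r : ℤ)) *
          RatFunc.X ^ ((kbar' p q r qinv : ℤ) * (p : ℤ) + (mIdx p r qinv : ℤ) * ((r : ℤ) * s))
      + XXt p q r qinv s
      - (1 - RatFunc.X ^ ((r : ℤ) * s)) *
          (∑ i ∈ Finset.Icc 1 (mIdx p r qinv),
            RatFunc.X ^ (Qi p r qinv i * (q : ℤ) + ((i : ℤ) - 1) * ((r : ℤ) * s)))
    = YYt p q r qinv s := by
  have hX0 : (RatFunc.X : RatFunc ℚ) ≠ 0 := RatFunc.X_ne_zero
  unfold XXt YYt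
  have h1 : (RatFunc.X : RatFunc ℚ) ^ (Qp' p r qinv * (q : ℤ) + (mIdx p r qinv : ℤ) * ((r : ℤ) * s))
      = RatFunc.X ^ (r : ℤ) *
          RatFunc.X ^ ((kbar' p q r qinv : ℤ) * (p : ℤ) + (mIdx p r qinv : ℤ) * ((r : ℤ) * s)) := by
    rw [← zpow_add₀ hX0]
    congr 1
    linear_combination hB
  rw [h1]
  ring

end Algebra



private lemma habs1 (dr dq tq u trs Yt Y A34 K Sm Tp SQ : RatFunc ℚ)
    (hdr : dr ≠ 0) (hdq : dq ≠ 0) :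
    dr * (tq * Yt / dq * (u / dr * A34 - trs * (u / dr * K)) +
        tq * Y / dq * ((u / dr * Sm + Tp) * trs - trs * SQ * (u / dr)))
      = tq / dq * (Yt * (u * A34 - trs * (u * K)) +
          Y * ((u * Sm + dr * Tp) * trs - trs * SQ * u)) := by
  field_simp

private lemma habs2 (dp dq tq trs Xt X Y Yt : RatFunc ℚ)
    (hdp : dp ≠ 0) (hdq : dq ≠ 0) :
    -(dp * (trs * (Xt / dp * (tq * Y / dq) - tq * Yt / dq * (X / dp))))
      = tq / dq * (-(trs * (Xt * Y - Yt * X))) := by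
  field_simp

set_option maxHeartbeats 1600000 in
theorem stmt10 (p q r : ℕ) (qinv s : ℤ) (hcop : Nat.Coprime p q)
    (hq0 : 0 < q) (hqp : q < p) (hr1 : 1 < r) (hrp : r < p)
    (hqinv : ((q : ℤ) * qinv) % (p : ℤ) = 1) :
    (1 - RatFunc.X ^ (r : ℤ)) * minor1 p q r qinv s =
      -((1 - RatFunc.X ^ (p : ℤ)) * minor2 p q r qinv s) := by
  have hp0 : 0 < p := hq0.trans hqp
  have hdp : (1 : RatFunc ℚ) - RatFunc.X ^ (p : ℤ) ≠ 0 := one_sub_X_zpow_ne p hp0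
  have hdq : (1 : RatFunc ℚ) - RatFunc.X ^ (q : ℤ) ≠ 0 := one_sub_X_zpow_ne q hq0
  have hdr : (1 : RatFunc ℚ) - RatFunc.X ^ (r : ℤ) ≠ 0 := one_sub_X_zpow_ne r (by omega)
  obtain ⟨hA, hB⟩ := facts p q r qinv hq0 hqp hr1 hrp hqinv
  have e1 := E1lem p q r qinv s (by omega) hA
  have e2 := E2lem p q r qinv s hB
  have core :
      YYt p q r qinv s * ((1 - RatFunc.X ^ ((r : ℤ) * s)) * a34 p q r qinv s
        - RatFunc.X ^ ((r : ℤ) * s) * ((1 - RatFunc.X ^ ((r : ℤ) * s)) *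
            ∑ i ∈ Finset.Icc 1 r,
              RatFunc.X ^ ((kbar p q r qinv i : ℤ) * (p : ℤ) + ((i : ℤ) - 1) * ((r : ℤ) * s))))
      + YY p q r qinv s * (((1 - RatFunc.X ^ ((r : ℤ) * s)) *
            (∑ i ∈ Finset.Icc 1 (mIdx p r qinv),
              RatFunc.X ^ ((kbar p q r qinv i : ℤ) * (p : ℤ) + ((i : ℤ) - 1) * ((r : ℤ) * s)))
          + (1 - RatFunc.X ^ (r : ℤ)) *
              RatFunc.X ^ ((kbar' p q r qinv : ℤ) * (p : ℤ) + (mIdx p r qinv : ℤ) * ((r : ℤ) * s))) *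
            RatFunc.X ^ ((r : ℤ) * s)
        - (RatFunc.X ^ ((r : ℤ) * s) *
            ∑ i ∈ Finset.Icc 1 (mIdx p r qinv),
              RatFunc.X ^ (Qi p r qinv i * (q : ℤ) + ((i : ℤ) - 1) * ((r : ℤ) * s))) *
            (1 - RatFunc.X ^ ((r : ℤ) * s)))
      = -(RatFunc.X ^ ((r : ℤ) * s) *
          (XXt p q r qinv s * YY p q r qinv s - YYt p q r qinv s * XX p q r qinv s)) := by
    linear_combination YYt p q r qinv s * e1 + RatFunc.X ^ ((r : ℤ) * s) * YY p q r qinv s * e2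
  have h1 : (1 - RatFunc.X ^ (r : ℤ)) * minor1 p q r qinv s
      = (RatFunc.X ^ (q : ℤ) / (1 - RatFunc.X ^ (q : ℤ))) *
        (YYt p q r qinv s * ((1 - RatFunc.X ^ ((r : ℤ) * s)) * a34 p q r qinv s
          - RatFunc.X ^ ((r : ℤ) * s) * ((1 - RatFunc.X ^ ((r : ℤ) * s)) *
              ∑ i ∈ Finset.Icc 1 r,
                RatFunc.X ^ ((kbar p q r qinv i : ℤ) * (p : ℤ) + ((i : ℤ) - 1) * ((r : ℤ) * s))))
        + YY p q r qinv s * (((1 - RatFunc.X ^ ((r : ℤ) * s)) *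
              (∑ i ∈ Finset.Icc 1 (mIdx p r qinv),
                RatFunc.X ^ ((kbar p q r qinv i : ℤ) * (p : ℤ) + ((i : ℤ) - 1) * ((r : ℤ) * s)))
            + (1 - RatFunc.X ^ (r : ℤ)) *
                RatFunc.X ^ ((kbar' p q r qinv : ℤ) * (p : ℤ) + (mIdx p r qinv : ℤ) * ((r : ℤ) * s))) *
              RatFunc.X ^ ((r : ℤ) * s)
          - (RatFunc.X ^ ((r : ℤ) * s) *
              ∑ i ∈ Finset.Icc 1 (mIdx p r qinv),
                RatFunc.X ^ (Qi p r qinv i * (q : ℤ) + ((i : ℤ) - 1) * ((r : ℤ) * s))) *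
              (1 - RatFunc.X ^ ((r : ℤ) * s)))) := by
    unfold minor1 a12 a13 a14 a22 a24 a32 a33
    exact habs1 _ _ _ _ _ _ _ _ _ _ _ _ hdr hdq
  have h2 : -((1 - RatFunc.X ^ (p : ℤ)) * minor2 p q r qinv s)
      = (RatFunc.X ^ (q : ℤ) / (1 - RatFunc.X ^ (q : ℤ))) *
        (-(RatFunc.X ^ ((r : ℤ) * s) *
          (XXt p q r qinv s * YY p q r qinv s - YYt p q r qinv s * XX p q r qinv s))) := by
    unfold minor2 a11 a13 a24 a31 a33
    exact habs2 _ _ _ _ _ _ _ _ hdp hdq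
  rw [h1, h2, core]
end
end
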